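/- arXiv:math/0611744 — 4 statements merged into one kernel-verified Lean document; each statement's English description precedes it below -/
import Mathlib

section
/- If X is an infinite subset of T = 2^{<ω} that cannot be covered by finitely many branches, then X contains an infinite set S with ⌊S⌋ = ∅, i.e., every branch of T meets S in a finite set. -/
open Cardinal Set

/-- The full binary tree `T = 2^{<ω}`, modeled as finite lists of booleans;
`s ≤ t` iff `t` is a prefix of `s` (i.e. `s` extends `t`). -/
abbrev BinTree := List Bool

/-- The restriction `f↾n ∈ 2^{<ω}` of `f ∈ 2^ω`. -/
def restr (f : ℕ → Bool) (n : ℕ) : BinTree := List.ofFn (fun i : Fin n => f i)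

/-- The branch `B(f) = { f↾n : n ∈ ω }` induced by `f ∈ 2^ω`. -/
def branch (f : ℕ → Bool) : Set BinTree := Set.range (restr f)

/-- `⌊X⌋ = { f ∈ 2^ω : |B(f) ∩ X| = ℵ₀ }`. -/
def floorSet (X : Set BinTree) : Set (ℕ → Bool) := {f | (branch f ∩ X).Infinite}

/-- `X` is covered by finitely many branches of `T`. -/
def CoveredByFinitelyManyBranches (X : Set BinTree) : Prop :=
  ∃ s : Finset (ℕ → Bool), X ⊆ ⋃ f ∈ s, branch f

/-- `X` contains no infinite antichain (w.r.t. the prefix/extension order on `T`). -/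
def NoInfiniteAntichain (X : Set BinTree) : Prop :=
  ¬ ∃ A ⊆ X, A.Infinite ∧ IsAntichain (· <+: ·) A

/-- The class `ℬ_T` of infinite subsets of `T` containing no infinite antichain. -/
def Bclass : Set (Set BinTree) := { X | X.Infinite ∧ NoInfiniteAntichain X }

/-- The class `𝒜_T` of infinite antichains of `T`. -/
def Aclass : Set (Set BinTree) := { X | X.Infinite ∧ IsAntichain (· <+: ·) X }

/-- The class `𝒩𝒟_T` of infinite `X ⊆ T` with `⌊X⌋` nowhere dense in Cantor space. -/
def NDclass : Set (Set BinTree) := { X | X.Infinite ∧ IsNowhereDense (floorSet X) }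

/-- `σ` is the standard fair-coin product measure on `2^ω`, characterized as a
probability measure giving each basic clopen set `{ f : f↾ℓ(t) = t }` measure `2^{-ℓ(t)}`. -/
def IsCantorMeasure (σ : MeasureTheory.Measure (ℕ → Bool)) : Prop :=
  MeasureTheory.IsProbabilityMeasure σ ∧
    ∀ t : BinTree, σ { f | restr f t.length = t } = (2 : ENNReal)⁻¹ ^ t.length

/-- The class `𝒩_T` (w.r.t. a measure `σ` on `2^ω`) of infinite `X ⊆ T` with `σ(⌊X⌋) = 0`. -/
def Nclass (σ : MeasureTheory.Measure (ℕ → Bool)) : Set (Set BinTree) :=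
  { X | X.Infinite ∧ σ (floorSet X) = 0 }

/-- Pairwise almost disjoint family of infinite sets. -/
def ADFamily {α : Type*} (F : Set (Set α)) : Prop :=
  (∀ X ∈ F, X.Infinite) ∧ F.Pairwise fun X Y => (X ∩ Y).Finite

/-- `F` is a maximal almost disjoint family within `𝒳`. -/
def MadIn {α : Type*} (𝒳 F : Set (Set α)) : Prop :=
  F ⊆ 𝒳 ∧ ADFamily F ∧ ∀ Y ∈ 𝒳, ∃ X ∈ F, (Y ∩ X).Infinite

/-- The collection `[α]^{ℵ₀}` of all infinite subsets of `α`. -/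
def infSets (α : Type*) : Set (Set α) := { X | X.Infinite }

/-- `𝔞(𝒳)`: the least cardinality of an infinite mad family within `𝒳`. -/
noncomputable def aInv {α : Type*} (𝒳 : Set (Set α)) : Cardinal :=
  sInf { c : Cardinal | ∃ F, F.Infinite ∧ MadIn 𝒳 F ∧ #F = c }

/-- `cov(ℳ)`: the least number of meager subsets of `2^ω` covering `2^ω`. -/
noncomputable def covMeager : Cardinal :=
  sInf { c : Cardinal | ∃ S : Set (Set (ℕ → Bool)),
    (∀ A ∈ S, IsMeagre A) ∧ ⋃₀ S = Set.univ ∧ #S = c }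

/-- `cov(𝒩)`: the least number of `σ`-null subsets of `2^ω` covering `2^ω`. -/
noncomputable def covNull (σ : MeasureTheory.Measure (ℕ → Bool)) : Cardinal :=
  sInf { c : Cardinal | ∃ S : Set (Set (ℕ → Bool)),
    (∀ A ∈ S, σ A = 0) ∧ ⋃₀ S = Set.univ ∧ #S = c }

/-- `F^⊥`: the family of infinite sets almost disjoint from every member of `F`. -/
def perp {α : Type*} (F : Set (Set α)) : Set (Set α) :=
  { Y | Y.Infinite ∧ ∀ X ∈ F, (Y ∩ X).Finite }

/-- Membership in the ideal `ℐ(G)` generated by `G` together with the finite sets: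
`S ⊆* ∪G'` for some finite `G' ⊆ G`. -/
def InIdeal {α : Type*} (G : Set (Set α)) (S : Set α) : Prop :=
  ∃ G' : Finset (Set α), ↑G' ⊆ G ∧ (S \ ⋃₀ ↑G').Finite

/-- `𝔞⁺(F) = 𝔞(F^⊥)`. -/
noncomputable def aPlus {α : Type*} (F : Set (Set α)) : Cardinal := aInv (perp F)

/-- `B` almost decides `F`: `B^⊥` is exactly the family of infinite members of
the ideal generated by `F \ B` and the finite sets. -/
def AlmostDecides {α : Type*} (B F : Set (Set α)) : Prop :=
  perp B = { Y | Y.Infinite ∧ InIdeal (F \ B) Y }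

/-- A subset `C` of a poset is centered: every finite subset of `C` has a common
lower bound. -/
def Centered {P : Type*} [Preorder P] (C : Set P) : Prop :=
  ∀ s : Finset P, ↑s ⊆ C → ∃ p, ∀ q ∈ s, p ≤ q

/-- A poset is σ-centered: it is a countable union of centered subsets. -/
def SigmaCentered (P : Type*) [Preorder P] : Prop :=
  ∃ C : ℕ → Set P, (∀ n, Centered (C n)) ∧ ⋃ n, C n = Set.univ

/-- `D` is dense (below every condition) in the poset `P`. -/
def DenseBelow {P : Type*} [Preorder P] (D : Set P) : Prop :=
  ∀ p : P, ∃ q ∈ D, q ≤ p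

/-- `G` is a filter on the poset `P`. -/
def IsFilterOn {P : Type*} [Preorder P] (G : Set P) : Prop :=
  (∀ p ∈ G, ∀ q, p ≤ q → q ∈ G) ∧ ∀ p ∈ G, ∀ q ∈ G, ∃ r ∈ G, r ≤ p ∧ r ≤ q

/-- Martin's axiom for σ-centered posets: for every nonempty σ-centered poset and
fewer than continuum many dense sets there is a filter meeting them all. -/
def MASigmaCentered : Prop :=
  ∀ (P : Type) (_ : Preorder P) (_ : Nonempty P), SigmaCentered P →
    ∀ 𝒟 : Set (Set P), #𝒟 < Cardinal.continuum → (∀ D ∈ 𝒟, DenseBelow D) →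
      ∃ G : Set P, IsFilterOn G ∧ ∀ D ∈ 𝒟, (G ∩ D).Nonempty

namespace Stmt1Aux

lemma length_restr (f : ℕ → Bool) (n : ℕ) : (restr f n).length = n := by simp [restr]

lemma take_restr (f : ℕ → Bool) {m n : ℕ} (h : m ≤ n) : (restr f n).take m = restr f m := by
  apply List.ext_getElem <;> simp [restr, h, Nat.min_eq_left]

lemma restr_prefix (f : ℕ → Bool) {m n : ℕ} (h : m ≤ n) : restr f m <+: restr f n := by
  rw [← take_restr f h]; exact List.take_prefix _ _

lemma comparable_of_prefix {a b c : BinTree} (ha : a <+: c) (hb : b <+: c) :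
    a <+: b ∨ b <+: a := by
  rcases le_total a.length b.length with h | h
  · exact Or.inl (List.prefix_of_prefix_length_le ha hb h)
  · exact Or.inr (List.prefix_of_prefix_length_le hb ha h)

lemma cov_mono {A B : Set BinTree} (h : A ⊆ B) (hB : CoveredByFinitelyManyBranches B) :
    CoveredByFinitelyManyBranches A := by
  classical
  obtain ⟨s, hs⟩ := hB; exact ⟨s, h.trans hs⟩

lemma cov_union {A B : Set BinTree} (hA : CoveredByFinitelyManyBranches A)
    (hB : CoveredByFinitelyManyBranches B) : CoveredByFinitelyManyBranches (A ∪ B) := by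
  classical
  obtain ⟨s, hs⟩ := hA; obtain ⟨t, ht⟩ := hB
  refine ⟨s ∪ t, ?_⟩
  rintro x (hx | hx)
  · obtain ⟨u, ⟨g, rfl⟩, hm⟩ := hs hx
    simp only [Set.mem_iUnion] at hm ⊢
    obtain ⟨hg, hm⟩ := hm
    exact ⟨g, Finset.mem_union_left _ hg, hm⟩
  · obtain ⟨u, ⟨g, rfl⟩, hm⟩ := ht hx
    simp only [Set.mem_iUnion] at hm ⊢
    obtain ⟨hg, hm⟩ := hm
    exact ⟨g, Finset.mem_union_right _ hg, hm⟩

lemma cov_singleton (s : BinTree) : CoveredByFinitelyManyBranches {s} := by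
  refine ⟨{fun i => s.getD i false}, ?_⟩
  rintro x rfl
  simp only [Set.mem_iUnion, Finset.mem_singleton]
  refine ⟨_, rfl, x.length, ?_⟩
  apply List.ext_getElem <;> simp [restr]

def Ext (t : BinTree) : Set BinTree := {x | t <+: x}

def Big (X : Set BinTree) (t : BinTree) : Prop :=
  ¬ CoveredByFinitelyManyBranches (X ∩ Ext t)

lemma succ_prefix {s x : BinTree} (h : s <+: x) (hne : s ≠ x) : ∃ b, s ++ [b] <+: x := by
  obtain ⟨r, rfl⟩ := h
  cases r with
  | nil => simp at hne
  | cons b r => exact ⟨b, r, by simp⟩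

lemma big_child {X : Set BinTree} {t : BinTree} (h : Big X t) :
    Big X (t ++ [false]) ∨ Big X (t ++ [true]) := by
  by_contra hc
  push_neg at hc
  simp only [Big, not_not] at hc
  obtain ⟨h0, h1⟩ := hc
  apply h
  have hsub : X ∩ Ext t ⊆ ({t} ∪ (X ∩ Ext (t ++ [false]))) ∪ (X ∩ Ext (t ++ [true])) := by
    rintro x ⟨hxX, hxt⟩
    by_cases he : t = x
    · exact Or.inl (Or.inl he.symm)
    · obtain ⟨b, hb⟩ := succ_prefix hxt he
      cases b
      · exact Or.inl (Or.inr ⟨hxX, hb⟩)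
      · exact Or.inr ⟨hxX, hb⟩
  exact cov_mono hsub (cov_union (cov_union (cov_singleton t) h0) h1)

end Stmt1Aux

namespace Stmt1Aux

lemma prefix_getElem {a b : BinTree} (h : a <+: b) {k : ℕ} (hk : k < a.length)
    (hk' : k < b.length) : b[k] = a[k] := by
  obtain ⟨r, rfl⟩ := h
  simp [List.getElem_append, hk]

lemma key {X : Set BinTree} {t : BinTree} (ht : Big X t) :
    ∃ t' x, t <+: t' ∧ Big X t' ∧ x ∈ X ∧ t <+: x ∧ ¬ x <+: t' ∧ ¬ t' <+: x := by
  classical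
  by_contra hcon
  push_neg at hcon
  set g : BinTree → BinTree :=
    fun s => if Big X (s ++ [false]) then s ++ [false] else s ++ [true] with hgdef
  have hgs : ∀ s, Big X s → Big X (g s) ∧ s <+: g s ∧ (g s).length = s.length + 1 := by
    intro s hs
    by_cases h : Big X (s ++ [false])
    · simp only [hgdef, if_pos h]
      exact ⟨h, ⟨[false], rfl⟩, by simp⟩
    · simp only [hgdef, if_neg h]
      exact ⟨(big_child hs).resolve_left h, ⟨[true], rfl⟩, by simp⟩
  set seq : ℕ → BinTree := fun n => g^[n] t with hseqdef
  have hseq_succ : ∀ n, seq (n + 1) = g (seq n) := by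
    intro n; simp [hseqdef, Function.iterate_succ_apply']
  have hbig : ∀ n, Big X (seq n) := by
    intro n; induction n with
    | zero => simpa [hseqdef] using ht
    | succ n ih => rw [hseq_succ]; exact (hgs _ ih).1
  have hlen : ∀ n, (seq n).length = t.length + n := by
    intro n; induction n with
    | zero => simp [hseqdef]
    | succ n ih => rw [hseq_succ, (hgs _ (hbig n)).2.2, ih]; ring
  have hchain : ∀ m n, m ≤ n → seq m <+: seq n := by
    intro m n h
    induction n with
    | zero => simp_all
    | succ n ih =>
      rcases Nat.lt_or_ge m (n+1) with h' | h'
      · exact (ih (Nat.lt_succ_iff.mp h')).trans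
          (by rw [hseq_succ]; exact (hgs _ (hbig n)).2.1)
      · have : m = n + 1 := le_antisymm h h'
        simp [this]
  set f : ℕ → Bool := fun k => (seq (k+1)).getD k false with hfdef
  have hfk : ∀ k, f k = (seq (k+1)).getD k false := fun _ => rfl
  have hrestr : ∀ n, seq n = restr f (t.length + n) := by
    intro n
    apply List.ext_getElem
    · simp [hlen, length_restr]
    · intro k hk1 hk2
      have hk : k < t.length + n := by simpa [length_restr] using hk2
      have hk3 : k < (seq (k+1)).length := by rw [hlen]; omega
      have : (restr f (t.length + n))[k] = f k := by simp [restr]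
      rw [this, hfk, List.getD_eq_getElem _ _ hk3]
      rcases Nat.lt_or_ge n (k+1) with h | h
      · exact (prefix_getElem (hchain n (k+1) (by omega)) (by rw [hlen]; omega) hk3).symm
      · exact prefix_getElem (hchain _ _ h) hk3 hk1
  apply ht
  refine ⟨{f}, ?_⟩
  rintro x ⟨hxX, hxt⟩
  have htseq : ∀ n, t <+: seq n := fun n => by
    have := hchain 0 n (Nat.zero_le n); simpa [hseqdef] using this
  have hcomp := hcon (seq x.length) x (htseq _) (hbig _) hxX hxt
  have hxp : x <+: seq x.length := by
    by_cases hc : x <+: seq x.length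
    · exact hc
    · have := hcomp hc
      have : seq x.length = x :=
        List.IsPrefix.eq_of_length_le this (by rw [hlen]; omega)
      simp [this]
  have hxr : x <+: restr f (t.length + x.length) := by rwa [← hrestr]
  have : x = restr f x.length := by
    have h1 : restr f x.length <+: restr f (t.length + x.length) :=
      restr_prefix f (by omega)
    have h2 : x <+: restr f x.length :=
      List.prefix_of_prefix_length_le hxr h1 (by rw [length_restr])
    exact List.IsPrefix.eq_of_length_le h2 (by rw [length_restr])
  simp only [Set.mem_iUnion, Finset.mem_singleton]
  exact ⟨f, rfl, x.length, this.symm⟩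

end Stmt1Aux

namespace Stmt1Aux

open scoped Classical in
noncomputable def step (X : Set BinTree) (t : BinTree) : BinTree × BinTree :=
  if h : Big X t then ⟨(key h).choose, (key h).choose_spec.choose⟩ else (t, t)

lemma step_spec {X : Set BinTree} {t : BinTree} (h : Big X t) :
    t <+: (step X t).1 ∧ Big X (step X t).1 ∧ (step X t).2 ∈ X ∧ t <+: (step X t).2 ∧
      ¬ (step X t).2 <+: (step X t).1 ∧ ¬ (step X t).1 <+: (step X t).2 := by
  classical
  rw [step, dif_pos h]
  exact (key h).choose_spec.choose_spec

end Stmt1Aux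

/-- If an infinite `X ⊆ 2^{<ω}` cannot be covered by finitely many branches, then `X`
contains an infinite off-binary set `S`, i.e. `⌊S⌋ = ∅`. -/
theorem stmt1 (X : Set BinTree) (hX : X.Infinite)
    (h : ¬ CoveredByFinitelyManyBranches X) :
    ∃ S ⊆ X, S.Infinite ∧ floorSet S = ∅ := by
  classical
  have hbig0 : Stmt1Aux.Big X [] := by
    intro hc
    exact h (Stmt1Aux.cov_mono (B := X ∩ Stmt1Aux.Ext [])
      (fun x hx => ⟨hx, List.nil_prefix⟩) hc)
  set tseq : ℕ → BinTree := fun n => (fun t => (Stmt1Aux.step X t).1)^[n] [] with htdef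
  have htsucc : ∀ n, tseq (n+1) = (Stmt1Aux.step X (tseq n)).1 := fun n => by
    simp [htdef, Function.iterate_succ_apply']
  have hbig : ∀ n, Stmt1Aux.Big X (tseq n) := by
    intro n; induction n with
    | zero => simpa [htdef] using hbig0
    | succ n ih => rw [htsucc]; exact (Stmt1Aux.step_spec ih).2.1
  set xs : ℕ → BinTree := fun n => (Stmt1Aux.step X (tseq n)).2 with hxdef
  have hxX : ∀ n, xs n ∈ X := fun n => (Stmt1Aux.step_spec (hbig n)).2.2.1
  have htx : ∀ n, tseq n <+: xs n := fun n => (Stmt1Aux.step_spec (hbig n)).2.2.2.1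
  have hinc1 : ∀ n, ¬ xs n <+: tseq (n+1) := fun n => by
    rw [htsucc]; exact (Stmt1Aux.step_spec (hbig n)).2.2.2.2.1
  have hinc2 : ∀ n, ¬ tseq (n+1) <+: xs n := fun n => by
    rw [htsucc]; exact (Stmt1Aux.step_spec (hbig n)).2.2.2.2.2
  have hchain : ∀ m n, m ≤ n → tseq m <+: tseq n := by
    intro m n hmn
    induction n with
    | zero => simp_all
    | succ n ih =>
      rcases Nat.lt_or_ge m (n+1) with h' | h'
      · refine (ih (Nat.lt_succ_iff.mp h')).trans ?_
        rw [htsucc]; exact (Stmt1Aux.step_spec (hbig n)).1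
      · have he : m = n + 1 := le_antisymm hmn h'
        simp [he]
  have hpair : ∀ m n, m < n → ¬ xs m <+: xs n ∧ ¬ xs n <+: xs m := by
    intro m n hmn
    have h1 : tseq (m+1) <+: xs n := (hchain (m+1) n hmn).trans (htx n)
    constructor
    · intro hp
      rcases Stmt1Aux.comparable_of_prefix hp h1 with h2 | h2
      · exact hinc1 m h2
      · exact hinc2 m h2
    · intro hp
      exact hinc2 m (h1.trans hp)
  have hinj : Function.Injective xs := by
    intro m n hmn
    by_contra hne
    rcases Nat.lt_or_ge m n with h' | h'
    · exact (hpair m n h').1 (by rw [hmn])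
    · exact (hpair n m (lt_of_le_of_ne h' (Ne.symm hne))).1 (by rw [hmn])
  refine ⟨Set.range xs, ?_, ?_, ?_⟩
  · rintro _ ⟨n, rfl⟩; exact hxX n
  · exact Set.infinite_range_of_injective hinj
  · ext f
    simp only [floorSet, Set.mem_setOf_eq, Set.mem_empty_iff_false, iff_false]
    intro hinf
    obtain ⟨a, ha, b, hb, hab⟩ := hinf.nontrivial
    obtain ⟨⟨ka, hka⟩, m, hm⟩ := ha
    obtain ⟨⟨kb, hkb⟩, n, hn⟩ := hb
    have hmn : m ≠ n := fun e => hab (by rw [← hm, ← hn, e])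
    have hcmp : a <+: b ∨ b <+: a := by
      rcases le_total ka kb with h' | h'
      · left; rw [← hka, ← hkb]; exact Stmt1Aux.restr_prefix f h'
      · right; rw [← hka, ← hkb]; exact Stmt1Aux.restr_prefix f h'
    rcases Nat.lt_or_ge m n with h' | h'
    · rcases hcmp with hc | hc
      · exact (hpair m n h').1 (by rw [hm, hn]; exact hc)
      · exact (hpair m n h').2 (by rw [hm, hn]; exact hc)
    · have h'' : n < m := lt_of_le_of_ne h' (Ne.symm hmn)
      rcases hcmp with hc | hc
      · exact (hpair n m h'').2 (by rw [hm, hn]; exact hc)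
      · exact (hpair n m h'').1 (by rw [hm, hn]; exact hc)
end

section
/- Let ℬ_T be the family of infinite subsets of T = 2^{<ω} containing no infinite antichain. If ℱ ⊆ ℬ_T is a pairwise almost disjoint family of cardinality strictly less than the continuum, then ℱ is not maximal almost disjoint within ℬ_T: there exists Y ∈ ℬ_T almost disjoint from every member of ℱ. -/
open Cardinal Set

lemma restr_length (f : ℕ → Bool) (n : ℕ) : (restr f n).length = n := by simp [restr]

lemma restr_getElem (f : ℕ → Bool) {n i : ℕ} (h : i < n) :
    (restr f n)[i]'(by simp [restr, h]) = f i := by simp [restr]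

lemma restr_injective (f : ℕ → Bool) : Function.Injective (restr f) := fun a b h => by
  have := congrArg List.length h; simpa [restr_length] using this

lemma not_prefix_of_ne (u v : List Bool) (n : ℕ) (hu : n < u.length) (hv : n < v.length)
    (h : u[n]'hu ≠ v[n]'hv) : ¬ u <+: v := fun hp => h (hp.getElem hu)

lemma restr_prefix (f : ℕ → Bool) {a b : ℕ} (h : a ≤ b) : restr f a <+: restr f b := by
  obtain ⟨c, rfl⟩ := Nat.exists_eq_add_of_le h
  refine ⟨List.ofFn fun i : Fin c => f (a + i), ?_⟩
  simp [restr, List.ofFn_add]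

lemma splitting {S : Set (ℕ → Bool)} (hS : S.Infinite) :
    ∃ n g, g ∈ S ∧ ∃ S', S' ⊆ S ∧ S'.Infinite ∧ ∀ h ∈ S', h n ≠ g n := by
  obtain ⟨f, hf, g, hg, hfg⟩ := hS.nontrivial
  obtain ⟨n, hn⟩ := Function.ne_iff.mp hfg
  by_cases hc : (S ∩ {h | h n ≠ f n}).Infinite
  · exact ⟨n, f, hf, _, inter_subset_left, hc, fun h hh => hh.2⟩
  · have : (S ∩ {h | h n = f n}).Infinite := by
      by_contra hc2
      rw [Set.not_infinite] at hc hc2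
      have : S ⊆ (S ∩ {h | h n = f n}) ∪ (S ∩ {h | h n ≠ f n}) := by
        intro x hx; by_cases hx2 : x n = f n
        · exact Or.inl ⟨hx, hx2⟩
        · exact Or.inr ⟨hx, hx2⟩
      exact hS ((hc2.union hc).subset this)
    refine ⟨n, g, hg, _, inter_subset_left, this, fun h hh => ?_⟩
    rw [hh.2]; exact hn

lemma exists_big_restr {X : Set BinTree} {f : ℕ → Bool} (hf : f ∈ floorSet X) (N : ℕ) :
    ∃ m, N < m ∧ restr f m ∈ X := by
  have him : (branch f ∩ X) = restr f '' {m | restr f m ∈ X} := by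
    ext x; constructor
    · rintro ⟨⟨m, rfl⟩, hx⟩; exact ⟨m, hx, rfl⟩
    · rintro ⟨m, hm, rfl⟩; exact ⟨⟨m, rfl⟩, hm⟩
  have : ({m | restr f m ∈ X}).Infinite := by
    apply Set.Infinite.of_image (restr f); rw [← him]; exact hf
  obtain ⟨m, hm, hlt⟩ := this.exists_gt N
  exact ⟨m, hlt, hm⟩

lemma floorSet_finite {X : Set BinTree} (hX : NoInfiniteAntichain X) : (floorSet X).Finite := by
  classical
  by_contra hfin
  have hinf : (floorSet X).Infinite := hfin
  apply hX
  -- recursive splitting construction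
  have step : ∀ S : {S : Set (ℕ → Bool) // S.Infinite ∧ S ⊆ floorSet X},
      ∃ p : {S : Set (ℕ → Bool) // S.Infinite ∧ S ⊆ floorSet X} × (ℕ → Bool) × ℕ,
        p.1.1 ⊆ S.1 ∧ p.2.1 ∈ S.1 ∧ ∀ h ∈ p.1.1, h p.2.2 ≠ p.2.1 p.2.2 := by
    rintro ⟨S, hSinf, hSsub⟩
    obtain ⟨n, g, hg, S', hS'sub, hS'inf, hS'⟩ := splitting hSinf
    exact ⟨⟨⟨S', hS'inf, hS'sub.trans hSsub⟩, g, n⟩, hS'sub, hg, hS'⟩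
  choose stp h1 h2 h3 using step
  let seq : ℕ → {S : Set (ℕ → Bool) // S.Infinite ∧ S ⊆ floorSet X} :=
    fun k => Nat.rec ⟨floorSet X, hinf, subset_rfl⟩ (fun _ S => (stp S).1) k
  set fseq : ℕ → (ℕ → Bool) := fun k => (stp (seq k)).2.1 with hfseq
  set nseq : ℕ → ℕ := fun k => (stp (seq k)).2.2 with hnseq
  have hseq_succ : ∀ k, seq (k + 1) = (stp (seq k)).1 := fun k => rfl
  have mono : ∀ k j, k ≤ j → (seq j).1 ⊆ (seq k).1 := by
    intro k j hkj
    induction j with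
    | zero => simp_all
    | succ j ih =>
      rcases Nat.lt_or_ge k (j+1) with h | h
      · exact ((h1 (seq j)).trans (ih (Nat.lt_succ_iff.mp h)))
      · have : k = j + 1 := le_antisymm hkj h
        subst this; exact subset_rfl
  have key : ∀ k j, k < j → fseq j (nseq k) ≠ fseq k (nseq k) := by
    intro k j hkj
    have hmem : fseq j ∈ (seq j).1 := h2 (seq j)
    have : fseq j ∈ (seq (k+1)).1 := mono (k+1) j hkj hmem
    exact h3 (seq k) _ this
  have hfmem : ∀ k, fseq k ∈ floorSet X := fun k => (seq k).2.2 (h2 (seq k))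
  -- choose lengths
  have hm : ∀ j, ∃ m, (Finset.range (j+1)).sup nseq < m ∧ restr (fseq j) m ∈ X :=
    fun j => exists_big_restr (hfmem j) _
  choose m hm1 hm2 using hm
  have hmgt : ∀ k j, k ≤ j → nseq k < m j := by
    intro k j hkj
    exact lt_of_le_of_lt (Finset.le_sup (Finset.mem_range.mpr (Nat.lt_succ_of_le hkj))) (hm1 j)
  set x : ℕ → BinTree := fun j => restr (fseq j) (m j) with hx
  have hlen : ∀ k j, k ≤ j → nseq k < (x j).length := by
    intro k j h; rw [hx]; simpa [restr_length] using hmgt k j h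
  have hget : ∀ k j (h : k ≤ j), (x j)[nseq k]'(hlen k j h) = fseq j (nseq k) := by
    intro k j h; exact restr_getElem _ (hmgt k j h)
  have hnp : ∀ k j, k < j → ¬ x k <+: x j ∧ ¬ x j <+: x k := by
    intro k j hkj
    have hne : (x k)[nseq k]'(hlen k k le_rfl) ≠ (x j)[nseq k]'(hlen k j hkj.le) := by
      rw [hget k k le_rfl, hget k j hkj.le]
      exact (key k j hkj).symm
    exact ⟨not_prefix_of_ne _ _ _ _ _ hne, not_prefix_of_ne _ _ _ _ _ hne.symm⟩
  have hxinj : Function.Injective x := by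
    intro k j hkje
    by_contra hne
    rcases lt_or_gt_of_ne hne with h | h
    · exact (hnp k j h).1 (hkje ▸ List.prefix_refl _)
    · exact (hnp j k h).1 (hkje ▸ List.prefix_refl _)
  refine ⟨Set.range x, ?_, Set.infinite_range_of_injective hxinj, ?_⟩
  · rintro _ ⟨j, rfl⟩; exact hm2 j
  · rintro _ ⟨k, rfl⟩ _ ⟨j, rfl⟩ hne hp
    rcases lt_trichotomy k j with h | h | h
    · exact (hnp k j h).1 hp
    · exact hne (by rw [h])
    · exact (hnp j k h).2 hp

lemma mk_funBool : #(ℕ → Bool) = Cardinal.continuum := by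
  rw [← Cardinal.two_power_aleph0, ← Cardinal.mk_nat, ← Cardinal.mk_bool, Cardinal.power_def]

/-- An ad family in `ℬ_T` of size less than the continuum is not mad in `ℬ_T`. -/
theorem stmt2 (F : Set (Set BinTree)) (hF : F ⊆ Bclass)
    (had : ADFamily F) (hcard : #F < Cardinal.continuum) :
    ∃ Y ∈ Bclass, ∀ X ∈ F, (Y ∩ X).Finite := by
  classical
  have hU : #(⋃ X ∈ F, floorSet X) < Cardinal.continuum := by
    refine lt_of_le_of_lt (Cardinal.mk_biUnion_le floorSet F) ?_
    refine Cardinal.mul_lt_of_lt Cardinal.aleph0_le_continuum hcard ?_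
    refine lt_of_le_of_lt ?_ (Cardinal.aleph0_lt_continuum)
    refine ciSup_le' fun ⟨X, hX⟩ => ?_
    exact ((floorSet_finite (hF hX).2).lt_aleph0).le
  have : ∃ f, f ∉ ⋃ X ∈ F, floorSet X := by
    by_contra hc
    push_neg at hc
    have : (⋃ X ∈ F, floorSet X) = Set.univ := Set.eq_univ_of_forall hc
    rw [this, Cardinal.mk_univ, mk_funBool] at hU
    exact lt_irrefl _ hU
  obtain ⟨f, hf⟩ := this
  refine ⟨branch f, ⟨Set.infinite_range_of_injective (restr_injective f), ?_⟩, ?_⟩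
  · rintro ⟨A, hAsub, hAinf, hAanti⟩
    obtain ⟨a, ha, b, hb, hab⟩ := hAinf.nontrivial
    obtain ⟨i, rfl⟩ := hAsub ha
    obtain ⟨j, rfl⟩ := hAsub hb
    rcases le_total i j with h | h
    · exact hAanti ha hb hab (restr_prefix f h)
    · exact hAanti hb ha hab.symm (restr_prefix f h)
  · intro X hX
    rw [← Set.not_infinite]
    intro hi
    exact hf (Set.mem_biUnion hX hi)
end

section
/- For any infinite pairwise almost disjoint family 𝒢 on a countable set T, the least cardinality of an infinite mad family contained in the infinite members of the ideal generated by 𝒢 and the finite sets is exactly |𝒢|; that is, 𝔞(ℐ(𝒢) ∩ [T]^{ℵ₀}) = |𝒢|. -/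
open Cardinal Set

/-- If `Y` is infinite and almost covered by the finite union `⋃₀ G'`, then `Y` meets
some member of `G'` in an infinite set. -/
lemma key_inf (Y : Set BinTree) (hY : Y.Infinite) (G' : Finset (Set BinTree))
    (hfin : (Y \ ⋃₀ ↑G').Finite) : ∃ A ∈ G', (Y ∩ A).Infinite := by
  by_contra h
  push_neg at h
  have h1 : (Y ∩ ⋃₀ ↑G').Finite := by
    rw [Set.sUnion_eq_biUnion, Set.inter_iUnion₂]
    exact Set.Finite.biUnion G'.finite_toSet (fun A hA => h A (Finset.mem_coe.mp hA))
  exact hY ((hfin.union h1).subset (fun x hx => by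
    by_cases hx' : x ∈ ⋃₀ (↑G' : Set (Set BinTree))
    · exact Or.inr ⟨hx, hx'⟩
    · exact Or.inl ⟨hx, hx'⟩))

/-- For any infinite ad family `G` on `T`, the least size of an infinite mad family inside
the infinite members of the ideal generated by `G` and the finite sets is exactly `|G|`. -/
theorem stmt16 (G : Set (Set BinTree)) (hG : G.Infinite) (had : ADFamily G) :
    aInv { Y | Y.Infinite ∧ InIdeal G Y } = #G := by
  classical
  set 𝒳 := { Y | Y.Infinite ∧ InIdeal G Y } with h𝒳
  have hGsub : G ⊆ 𝒳 := by
    intro A hA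
    refine ⟨had.1 A hA, ⟨{A}, by simpa using hA, by simp⟩⟩
  have hGmad : MadIn 𝒳 G := by
    refine ⟨hGsub, had, fun Y hY => ?_⟩
    obtain ⟨G', hG'sub, hfin⟩ := hY.2
    obtain ⟨A, hA, hinf⟩ := key_inf Y hY.1 G' hfin
    exact ⟨A, hG'sub (Finset.mem_coe.mpr hA), hinf⟩
  have hlow : ∀ c ∈ {c : Cardinal | ∃ F, F.Infinite ∧ MadIn 𝒳 F ∧ #F = c}, #G ≤ c := by
    rintro c ⟨F, hFinf, ⟨hFsub, hFad, hFmax⟩, rfl⟩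
    choose! g hg using fun X (h : InIdeal G X) => h
    have hsub : G ⊆ ⋃ X ∈ F, (↑(g X) : Set (Set BinTree)) := by
      intro A hA
      obtain ⟨X, hXF, hinf⟩ := hFmax A (hGsub hA)
      obtain ⟨h1, h2⟩ := hg X (hFsub hXF).2
      have hfin' : ((A ∩ X) \ ⋃₀ ↑(g X)).Finite :=
        h2.subset (fun x hx => ⟨hx.1.2, hx.2⟩)
      obtain ⟨B, hB, hBinf⟩ := key_inf (A ∩ X) hinf (g X) hfin'
      have hAB : (A ∩ B).Infinite := hBinf.mono (fun x hx => ⟨hx.1.1, hx.2⟩)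
      have hAeqB : A = B := by
        by_contra hne
        exact hAB (had.2 hA (h1 (Finset.mem_coe.mpr hB)) hne)
      exact Set.mem_biUnion hXF (by rw [hAeqB]; exact Finset.mem_coe.mpr hB)
    calc #G ≤ #(⋃ X ∈ F, (↑(g X) : Set (Set BinTree))) := Cardinal.mk_le_mk_of_subset hsub
      _ ≤ #F * ℵ₀ := by
          refine le_trans (Cardinal.mk_biUnion_le _ _) ?_
          refine mul_le_mul_right (ciSup_le' fun X => ?_) _
          exact Cardinal.mk_le_aleph0
      _ = #F := by
          have : Infinite F := hFinf.to_subtype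
          exact Cardinal.mul_eq_left (Cardinal.aleph0_le_mk F) (Cardinal.aleph0_le_mk F) Cardinal.aleph0_ne_zero
  refine le_antisymm (csInf_le' ⟨G, hG, hGmad, rfl⟩) (le_csInf ⟨#G, G, hG, hGmad, rfl⟩ hlow)
end

section
/- Assuming Martin's Axiom for σ-centered posets (MA(σ-centered)), there is a mad family ℱ on T of cardinality 𝔠 that is 𝔠-almost decided: for every ℬ ∈ [ℱ]^𝔠, the family of infinite sets almost disjoint from all members of ℬ is exactly the set of infinite members of the ideal generated by ℱ \ ℬ and the finite sets. -/
open Cardinal Set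

/-!
Enumerate all subsets of `T` as `Y_i`, `i < 𝔠`, and build `A_i` by transfinite recursion. At stage
`i` the family `𝒜 = {A_j : j < i}` has fewer than `𝔠` members, and `MA(σ-centered)` for a
finite-approximation forcing yields `A_i` almost disjoint from `𝒜` such that every set `Z` among
`T` and the `Y_j` (`j ≤ i`) that is still positive (`Z ∉ ℐ(𝒜)`) meets `A_i` infinitely and stays
positive for `𝒜 ∪ {A_i}`. A positive set therefore stays positive forever and meets every later
`A_j` infinitely. This gives maximality, and it shows that a `Y_i` almost disjoint from `𝔠` many
members of `ℬ` was not positive at stage `i`: it is covered mod finite by finitely many `A_j`,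
and those lying in `ℬ` can be discarded.
-/

section Ideal

variable {α : Type*} {G G' : Set (Set α)} {S S' : Set α}

theorem inIdeal_of_finite (hS : S.Finite) : InIdeal G S :=
  ⟨∅, by simp, by simpa using hS⟩

theorem InIdeal.mono (hGG' : G ⊆ G') (h : InIdeal G S) : InIdeal G' S :=
  let ⟨F, hF, hfin⟩ := h
  ⟨F, hF.trans hGG', hfin⟩

theorem InIdeal.of_subset (hS : S' ⊆ S) (h : InIdeal G S) : InIdeal G S' :=
  let ⟨F, hF, hfin⟩ := h
  ⟨F, hF, hfin.subset (sdiff_subset_sdiff_left hS)⟩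

theorem infinite_sdiff_sUnion_of_not_inIdeal (h : ¬InIdeal G S) {F : Finset (Set α)}
    (hF : ↑F ⊆ G) : (S \ ⋃₀ ↑F).Infinite :=
  fun hfin => h ⟨F, hF, hfin⟩

theorem InIdeal.finite_of_forall_finite_inter (h : InIdeal G S)
    (hfin : ∀ X ∈ G, (S ∩ X).Finite) : S.Finite := by
  obtain ⟨F, hF, hSF⟩ := h
  rw [← sdiff_union_inter S (⋃₀ ↑F)]
  refine hSF.union ?_
  rw [sUnion_eq_biUnion, inter_iUnion₂]
  exact F.finite_toSet.biUnion fun X hX => hfin X (hF hX)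

theorem InIdeal.exists_infinite_inter (h : InIdeal G S) (hS : S.Infinite) :
    ∃ X ∈ G, (S ∩ X).Infinite := by
  by_contra! hfin
  exact hS (h.finite_of_forall_finite_inter hfin)

theorem InIdeal.sdiff_of_insert {A : Set α} (h : InIdeal (insert A G) S) : InIdeal G (S \ A) := by
  classical
  obtain ⟨F, hF, hfin⟩ := h
  refine ⟨F.erase A, by simpa [sdiff_singleton_subset_iff] using hF, hfin.subset ?_⟩
  rintro x ⟨⟨hxS, hxA⟩, hxF⟩
  refine ⟨hxS, fun ⟨X, hX, hxX⟩ => hxF ⟨X, ?_, hxX⟩⟩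
  exact Finset.mem_erase.2 ⟨by rintro rfl; exact hxA hxX, hX⟩

theorem InIdeal.sdiff_of_forall_finite_inter {B : Set (Set α)} (h : InIdeal G S)
    (hB : ∀ X ∈ B, (S ∩ X).Finite) : InIdeal (G \ B) S := by
  classical
  obtain ⟨F, hF, hfin⟩ := h
  refine ⟨F.filter (· ∉ B), fun X hX => ?_, ?_⟩
  · obtain ⟨hXF, hXB⟩ := Finset.mem_filter.1 hX
    exact ⟨hF hXF, hXB⟩
  · refine (InIdeal.of_subset sdiff_subset ⟨F, subset_rfl, hfin⟩).finite_of_forall_finite_inter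
      fun X hX => ?_
    by_cases hXB : X ∈ B
    · exact (hB X hXB).subset (inter_subset_inter_left _ sdiff_subset)
    · refine finite_empty.subset ?_
      rintro x ⟨⟨-, hx⟩, hxX⟩
      exact hx ⟨X, Finset.mem_filter.2 ⟨hX, hXB⟩, hxX⟩

theorem almostDecides_of_forall_perp_inIdeal {B F : Set (Set α)} (hF : ADFamily F) (hBF : B ⊆ F)
    (h : ∀ Y ∈ perp B, InIdeal F Y) : AlmostDecides B F := by
  refine Subset.antisymm (fun Y hY => ⟨hY.1, (h Y hY).sdiff_of_forall_finite_inter hY.2⟩) ?_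
  rintro Y ⟨hY, hYF⟩
  refine ⟨hY, fun X hX => (hYF.of_subset inter_subset_left).finite_of_forall_finite_inter
    fun W hW => ?_⟩
  exact (hF.2 (hBF hX) hW.1 (ne_of_mem_of_not_mem hX hW.2)).subset
    (inter_subset_inter_left W inter_subset_right)

theorem adFamily_range {ι : Type*} {A : ι → Set α} (hinf : ∀ i, (A i).Infinite)
    (hAD : Pairwise fun i j => (A i ∩ A j).Finite) : ADFamily (range A) := by
  refine ⟨forall_mem_range.2 hinf, ?_⟩
  rintro _ ⟨i, rfl⟩ _ ⟨j, rfl⟩ hne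
  exact hAD fun h => hne (h ▸ rfl)

theorem injective_of_pairwise_finite_inter {ι : Type*} {A : ι → Set α}
    (hinf : ∀ i, (A i).Infinite) (hAD : Pairwise fun i j => (A i ∩ A j).Finite) :
    Function.Injective A := fun i j h => by
  by_contra hne
  exact hinf j (by simpa [h] using hAD hne)

end Ideal

section CardinalBounds

universe u

variable {β : Type u}

theorem mk_insert_lt_continuum {s : Set β} {a : β} (hs : #s < 𝔠) : #(insert a s : Set β) < 𝔠 :=
  mk_insert_le.trans_lt
    (add_lt_of_lt aleph0_le_continuum hs (one_lt_aleph0.trans aleph0_lt_continuum))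

theorem mk_prod_lt_continuum {γ : Type u} (hβ : #β < 𝔠) (hγ : #γ < 𝔠) : #(β × γ) < 𝔠 := by
  simpa using mul_lt_of_lt aleph0_le_continuum hβ hγ

theorem mk_finset_subset_lt_continuum {s : Set β} (hs : #s < 𝔠) :
    #{F : Finset β // ↑F ⊆ s} < 𝔠 := by
  classical
  have hsurj : Function.Surjective fun F : Finset s =>
      (⟨F.map (Function.Embedding.subtype _), by simp⟩ : {F : Finset β // ↑F ⊆ s}) := by
    rintro ⟨F, hF⟩
    exact ⟨F.subtype (· ∈ s), Subtype.ext (Finset.subtype_map_of_mem hF)⟩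
  calc #{F : Finset β // ↑F ⊆ s} ≤ #(Finset s) := mk_le_of_surjective hsurj
    _ ≤ #(List s) := mk_le_of_surjective List.toFinset_surjective
    _ ≤ max ℵ₀ #s := mk_list_le_max _
    _ < 𝔠 := max_lt aleph0_lt_continuum hs

end CardinalBounds

/- A condition promises `inside ⊆ A`, `outside ∩ A = ∅`, and that no point added to `A` later
lies in a member of `avoid`; this makes `A` almost disjoint from each member of `avoid`. -/
structure ADCondition {T : Type} (𝒜 : Set (Set T)) : Type where
  inside : Finset T
  outside : Finset T
  avoid : Finset (Set T)
  avoid_subset : ↑avoid ⊆ 𝒜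
  disjoint : Disjoint inside outside

namespace ADCondition

variable {T : Type} {𝒜 : Set (Set T)}

instance : Preorder (ADCondition 𝒜) where
  le p q := q.inside ⊆ p.inside ∧ q.outside ⊆ p.outside ∧ q.avoid ⊆ p.avoid ∧
    ∀ x ∈ p.inside, x ∉ q.inside → ∀ X ∈ q.avoid, x ∉ X
  le_refl p := ⟨subset_rfl, subset_rfl, subset_rfl, fun _ hx hx' => absurd hx hx'⟩
  le_trans p q r hpq hqr := by
    refine ⟨hqr.1.trans hpq.1, hqr.2.1.trans hpq.2.1, hqr.2.2.1.trans hpq.2.2.1,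
      fun x hxp hxr X hX => ?_⟩
    by_cases hxq : x ∈ q.inside
    · exact hqr.2.2.2 x hxq hxr X hX
    · exact hpq.2.2.2 x hxp hxq X (hqr.2.2.1 hX)

instance : Nonempty (ADCondition 𝒜) := ⟨⟨∅, ∅, ∅, by simp, by simp⟩⟩

theorem centered_setOf_inside_eq (u : Finset T) :
    Centered {p : ADCondition 𝒜 | p.inside = u} := by
  classical
  intro s hs
  refine ⟨⟨u, s.sup outside, s.sup avoid, fun X hX => ?_,
    Finset.disjoint_sup_right.2 fun p hp => hs hp ▸ p.disjoint⟩, fun q hq => ?_⟩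
  · obtain ⟨p, -, hXp⟩ := Finset.mem_sup.1 hX
    exact p.avoid_subset hXp
  · have hq' : q.inside = u := hs hq
    exact ⟨hq'.subset, Finset.le_sup hq, Finset.le_sup hq,
      fun x hx hxq => absurd (hq' ▸ hx) hxq⟩

theorem sigmaCentered [Countable T] : SigmaCentered (ADCondition 𝒜) := by
  obtain ⟨e, he⟩ := exists_surjective_nat (Finset T)
  refine ⟨fun n => {p | p.inside = e n}, fun n => centered_setOf_inside_eq _,
    eq_univ_of_forall fun p => mem_iUnion.2 ?_⟩
  obtain ⟨n, hn⟩ := he p.inside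
  exact ⟨n, hn.symm⟩

def avoiding (X : Set T) : Set (ADCondition 𝒜) := {p | X ∈ p.avoid}

def meeting (W : Set T) (t : Finset T) : Set (ADCondition 𝒜) :=
  {p | ∃ x ∈ p.inside, x ∈ W \ ↑t}

def missing (W : Set T) (t : Finset T) : Set (ADCondition 𝒜) :=
  {p | ∃ x ∈ p.outside, x ∈ W \ ↑t}

theorem denseBelow_avoiding {X : Set T} (hX : X ∈ 𝒜) : DenseBelow (avoiding (𝒜 := 𝒜) X) := by
  classical
  intro q
  refine ⟨⟨q.inside, q.outside, insert X q.avoid, ?_, q.disjoint⟩, Finset.mem_insert_self _ _,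
    subset_rfl, subset_rfl, Finset.subset_insert _ _, fun _ hx hx' => absurd hx hx'⟩
  rw [Finset.coe_insert]
  exact insert_subset hX q.avoid_subset

theorem denseBelow_meeting {Z : Set T} (hZ : ¬InIdeal 𝒜 Z) (t : Finset T) :
    DenseBelow (meeting (𝒜 := 𝒜) Z t) := by
  classical
  intro q
  obtain ⟨x, ⟨hxZ, hxA⟩, hxs⟩ :=
    ((infinite_sdiff_sUnion_of_not_inIdeal hZ q.avoid_subset).sdiff
      (q.outside ∪ t).finite_toSet).nonempty
  simp only [Finset.coe_union, mem_union, not_or, Finset.mem_coe] at hxs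
  refine ⟨⟨insert x q.inside, q.outside, q.avoid, q.avoid_subset,
    Finset.disjoint_insert_left.2 ⟨hxs.1, q.disjoint⟩⟩,
    ⟨x, Finset.mem_insert_self _ _, hxZ, hxs.2⟩,
    Finset.subset_insert _ _, subset_rfl, subset_rfl, fun y hy hyq X hX hyX => ?_⟩
  obtain rfl := (Finset.mem_insert.1 hy).resolve_right hyq
  exact hxA ⟨X, hX, hyX⟩

theorem denseBelow_missing {W : Set T} (hW : W.Infinite) (t : Finset T) :
    DenseBelow (missing (𝒜 := 𝒜) W t) := by
  classical
  intro q
  obtain ⟨x, hxW, hxs⟩ := (hW.sdiff (q.inside ∪ t).finite_toSet).nonempty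
  simp only [Finset.coe_union, mem_union, not_or, Finset.mem_coe] at hxs
  exact ⟨⟨q.inside, insert x q.outside, q.avoid, q.avoid_subset,
    Finset.disjoint_insert_right.2 ⟨hxs.1, q.disjoint⟩⟩,
    ⟨x, Finset.mem_insert_self _ _, hxW, hxs.2⟩,
    subset_rfl, Finset.subset_insert _ _, subset_rfl, fun _ hx hx' => absurd hx hx'⟩

def genericSet (G : Set (ADCondition 𝒜)) : Set T := ⋃ p ∈ G, ↑p.inside

variable {G : Set (ADCondition 𝒜)}

theorem genericSet_inter_subset_inside (hG : IsFilterOn G) {p : ADCondition 𝒜} (hp : p ∈ G)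
    {X : Set T} (hX : X ∈ p.avoid) : genericSet G ∩ X ⊆ p.inside := by
  rintro x ⟨hx, hxX⟩
  obtain ⟨q, hq, hxq⟩ := mem_iUnion₂.1 hx
  obtain ⟨r, -, hrp, hrq⟩ := hG.2 p hp q hq
  by_contra hxp
  exact hrp.2.2.2 x (hrq.1 hxq) hxp X hX hxX

theorem notMem_genericSet (hG : IsFilterOn G) {p : ADCondition 𝒜} (hp : p ∈ G) {x : T}
    (hx : x ∈ p.outside) : x ∉ genericSet G := by
  intro hxG
  obtain ⟨q, hq, hxq⟩ := mem_iUnion₂.1 hxG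
  obtain ⟨r, -, hrp, hrq⟩ := hG.2 p hp q hq
  exact Finset.disjoint_left.1 r.disjoint (hrq.1 hxq) (hrp.2.1 hx)

theorem infinite_genericSet_inter {W : Set T} (hmeet : ∀ t, (G ∩ meeting W t).Nonempty) :
    (genericSet G ∩ W).Infinite := by
  intro hfin
  obtain ⟨p, hpG, x, hx, hxW, hxt⟩ := hmeet hfin.toFinset
  exact hxt (hfin.mem_toFinset.2 ⟨mem_iUnion₂.2 ⟨p, hpG, hx⟩, hxW⟩)

theorem infinite_sdiff_genericSet (hG : IsFilterOn G) {W : Set T}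
    (hmiss : ∀ t, (G ∩ missing W t).Nonempty) : (W \ genericSet G).Infinite := by
  intro hfin
  obtain ⟨p, hpG, x, hx, hxW, hxt⟩ := hmiss hfin.toFinset
  exact hxt (hfin.mem_toFinset.2 ⟨hxW, notMem_genericSet hG hpG hx⟩)

end ADCondition

open ADCondition

section Extension

variable {T : Type}

def IsGoodExtension (𝒜 𝒴 : Set (Set T)) (A : Set T) : Prop :=
  (∀ X ∈ 𝒜, (A ∩ X).Finite) ∧ ∀ Z ∈ 𝒴, (A ∩ Z).Infinite ∧ ¬InIdeal (insert A 𝒜) Z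

theorem exists_isGoodExtension (hMA : MASigmaCentered) [Countable T] {𝒜 𝒴 : Set (Set T)}
    (h𝒜 : #𝒜 < 𝔠) (h𝒴 : #𝒴 < 𝔠) (h𝒴𝒜 : ∀ Z ∈ 𝒴, ¬InIdeal 𝒜 Z) :
    ∃ A, IsGoodExtension 𝒜 𝒴 A := by
  let D₁ : 𝒜 → Set (ADCondition 𝒜) := fun X => avoiding X
  let D₂ : 𝒴 × Finset T → Set (ADCondition 𝒜) := fun Zt => meeting Zt.1 Zt.2
  let D₃ : 𝒴 × {F : Finset (Set T) // ↑F ⊆ 𝒜} × Finset T → Set (ADCondition 𝒜) :=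
    fun ZFt => missing (ZFt.1 \ ⋃₀ ↑ZFt.2.1.1) ZFt.2.2
  have hcount : #(Finset T) < 𝔠 := mk_le_aleph0.trans_lt aleph0_lt_continuum
  have hcard : #(range D₁ ∪ range D₂ ∪ range D₃ : Set (Set (ADCondition 𝒜))) < 𝔠 := by
    refine (mk_union_le _ _).trans_lt (add_lt_of_lt aleph0_le_continuum
      ((mk_union_le _ _).trans_lt (add_lt_of_lt aleph0_le_continuum
        (mk_range_le.trans_lt h𝒜) (mk_range_le.trans_lt (mk_prod_lt_continuum h𝒴 hcount))))
      (mk_range_le.trans_lt (mk_prod_lt_continuum h𝒴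
        (mk_prod_lt_continuum (mk_finset_subset_lt_continuum h𝒜) hcount))))
  have hdense : ∀ D ∈ range D₁ ∪ range D₂ ∪ range D₃, DenseBelow D := by
    rintro _ ((⟨X, rfl⟩ | ⟨⟨Z, t⟩, rfl⟩) | ⟨⟨Z, F, t⟩, rfl⟩)
    · exact denseBelow_avoiding X.2
    · exact denseBelow_meeting (h𝒴𝒜 Z Z.2) t
    · exact denseBelow_missing (infinite_sdiff_sUnion_of_not_inIdeal (h𝒴𝒜 Z Z.2) F.2) t
  obtain ⟨G, hG, hGD⟩ := hMA _ inferInstance inferInstance sigmaCentered _ hcard hdense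
  refine ⟨genericSet G, fun X hX => ?_, fun Z hZ => ⟨?_, fun hZA => ?_⟩⟩
  · obtain ⟨p, hpG, hp⟩ := hGD _ (Or.inl (Or.inl ⟨⟨X, hX⟩, rfl⟩))
    exact p.inside.finite_toSet.subset (genericSet_inter_subset_inside hG hpG hp)
  · exact infinite_genericSet_inter fun t => hGD _ (Or.inl (Or.inr ⟨(⟨Z, hZ⟩, t), rfl⟩))
  · obtain ⟨F, hF, hfin⟩ := hZA.sdiff_of_insert
    refine infinite_sdiff_genericSet (W := Z \ ⋃₀ ↑F) hG
      (fun t => hGD _ (Or.inr ⟨(⟨Z, hZ⟩, ⟨F, hF⟩, t), rfl⟩)) ?_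
    rwa [sdiff_sdiff_comm]

end Extension

theorem not_inIdeal_image_Iio_of_le {α ι : Type*} [LinearOrder ι] [WellFoundedLT ι]
    {A : ι → Set α} {Z : Set α} {j₀ i : ι}
    (hstep : ∀ j, j₀ ≤ j → ¬InIdeal (A '' Iio j) Z → ¬InIdeal (A '' Iic j) Z)
    (h₀ : ¬InIdeal (A '' Iio j₀) Z) (hi : j₀ ≤ i) : ¬InIdeal (A '' Iio i) Z := by
  classical
  induction i using WellFoundedLT.induction with
  | _ i ih =>
  rintro ⟨F, hF, hfin⟩
  obtain ⟨s, hsi, rfl⟩ := Finset.subset_set_image_iff.1 hF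
  obtain rfl | hs := s.eq_empty_or_nonempty
  · exact h₀ (inIdeal_of_finite (by simpa using hfin))
  have hcover : InIdeal (A '' Iic (s.max' hs)) Z :=
    ⟨s.image A, by simpa using image_mono fun k hk => s.le_max' k hk, hfin⟩
  rcases le_or_gt j₀ (s.max' hs) with hj | hj
  · exact hstep _ hj (ih _ (hsi (s.max'_mem hs)) hj) hcover
  · exact h₀ (hcover.mono (image_mono (Iic_subset_Iio.2 hj)))

section Recursion

variable {T ι : Type} [LinearOrder ι] [WellFoundedLT ι] (Y : ι → Set T)

/- Besides the enumerated sets, `univ` is kept positive, so that the construction never stops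
before `𝔠` steps. -/
def activeCandidates (i : ι) (𝒜 : Set (Set T)) : Set (Set T) :=
  {Z ∈ insert Set.univ (Y '' Iic i) | ¬InIdeal 𝒜 Z}

open scoped Classical in
noncomputable def madSeq : ι → Set T :=
  wellFounded_lt.fix fun i prev =>
    let 𝒜 := range fun j : Iio i => prev j j.2
    if h : ∃ A, IsGoodExtension 𝒜 (activeCandidates Y i 𝒜) A then h.choose else ∅

open scoped Classical in
theorem madSeq_eq (i : ι) : madSeq Y i =
    if h : ∃ A, IsGoodExtension (madSeq Y '' Iio i)
      (activeCandidates Y i (madSeq Y '' Iio i)) A then h.choose else ∅ := by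
  rw [madSeq, WellFounded.fix_eq, image_eq_range]

theorem isGoodExtension_madSeq (hMA : MASigmaCentered) [Countable T]
    (hι : ∀ i : ι, #(Iio i) < 𝔠) (i : ι) :
    IsGoodExtension (madSeq Y '' Iio i) (activeCandidates Y i (madSeq Y '' Iio i))
      (madSeq Y i) := by
  have hIic : #(Iic i) < 𝔠 := by
    rw [← Iio_insert]
    exact mk_insert_lt_continuum (hι i)
  have hex : ∃ A, IsGoodExtension (madSeq Y '' Iio i)
      (activeCandidates Y i (madSeq Y '' Iio i)) A :=
    exists_isGoodExtension hMA (mk_image_le.trans_lt (hι i))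
      ((mk_le_mk_of_subset (sep_subset _ _)).trans_lt
        (mk_insert_lt_continuum (mk_image_le.trans_lt hIic))) fun Z hZ => hZ.2
  rw [madSeq_eq, dif_pos hex]
  exact hex.choose_spec

theorem not_inIdeal_madSeq_of_le (hMA : MASigmaCentered) [Countable T]
    (hι : ∀ i : ι, #(Iio i) < 𝔠) {Z : Set T} {j₀ i : ι}
    (hZ : Z ∈ insert Set.univ (Y '' Iic j₀))
    (h₀ : ¬InIdeal (madSeq Y '' Iio j₀) Z) (hi : j₀ ≤ i) : ¬InIdeal (madSeq Y '' Iio i) Z := by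
  refine not_inIdeal_image_Iio_of_le (fun j hj hZj => ?_) h₀ hi
  rw [← Iio_insert, image_insert_eq]
  have hZj' : Z ∈ activeCandidates Y j (madSeq Y '' Iio j) :=
    ⟨insert_subset_insert (image_mono (Iic_subset_Iic.2 hj)) hZ, hZj⟩
  exact ((isGoodExtension_madSeq Y hMA hι j).2 Z hZj').2

theorem not_inIdeal_madSeq_univ (hMA : MASigmaCentered) [Countable T]
    (hι : ∀ i : ι, #(Iio i) < 𝔠) [Infinite T] (i : ι) : ¬InIdeal (madSeq Y '' Iio i) Set.univ := by
  have : Nonempty ι := ⟨i⟩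
  let := WellFoundedLT.toOrderBot ι
  refine not_inIdeal_madSeq_of_le Y hMA hι (mem_insert _ _) ?_ bot_le
  rw [Iio_bot, image_empty]
  exact fun h => infinite_univ (h.finite_of_forall_finite_inter (by simp))

theorem infinite_madSeq (hMA : MASigmaCentered) [Countable T]
    (hι : ∀ i : ι, #(Iio i) < 𝔠) [Infinite T] (i : ι) : (madSeq Y i).Infinite := by
  simpa using ((isGoodExtension_madSeq Y hMA hι i).2 Set.univ
    ⟨mem_insert _ _, not_inIdeal_madSeq_univ Y hMA hι i⟩).1

theorem pairwise_finite_inter_madSeq (hMA : MASigmaCentered) [Countable T]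
    (hι : ∀ i : ι, #(Iio i) < 𝔠) :
    Pairwise fun i j => (madSeq Y i ∩ madSeq Y j).Finite := by
  have hlt : ∀ {i j}, j < i → (madSeq Y i ∩ madSeq Y j).Finite := fun hji =>
    (isGoodExtension_madSeq Y hMA hι _).1 _ (mem_image_of_mem _ hji)
  intro i j hij
  rcases hij.lt_or_gt with h | h
  · rw [inter_comm]
    exact hlt h
  · exact hlt h

theorem infinite_madSeq_inter_of_not_inIdeal (hMA : MASigmaCentered) [Countable T]
    (hι : ∀ i : ι, #(Iio i) < 𝔠) {α i : ι}
    (h : ¬InIdeal (madSeq Y '' Iio α) (Y α)) (hi : α ≤ i) :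
    (madSeq Y i ∩ Y α).Infinite :=
  ((isGoodExtension_madSeq Y hMA hι i).2 (Y α)
    ⟨mem_insert_of_mem _ (mem_image_of_mem _ hi),
      not_inIdeal_madSeq_of_le Y hMA hι (mem_insert_of_mem _ (mem_image_of_mem _ le_rfl))
        h hi⟩).1

theorem exists_infinite_inter_madSeq (hMA : MASigmaCentered) [Countable T]
    (hι : ∀ i : ι, #(Iio i) < 𝔠) {α : ι} (hY : (Y α).Infinite) :
    ∃ X ∈ range (madSeq Y), (Y α ∩ X).Infinite := by
  by_cases h : InIdeal (madSeq Y '' Iio α) (Y α)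
  · obtain ⟨X, hX, hinf⟩ := h.exists_infinite_inter hY
    exact ⟨X, image_subset_range _ _ hX, hinf⟩
  · refine ⟨madSeq Y α, mem_range_self α, ?_⟩
    rw [inter_comm]
    exact infinite_madSeq_inter_of_not_inIdeal Y hMA hι h le_rfl

theorem inIdeal_range_madSeq_of_mem_perp (hMA : MASigmaCentered) [Countable T]
    (hι : ∀ i : ι, #(Iio i) < 𝔠) {B : Set (Set T)} (hB : B ⊆ range (madSeq Y))
    (hBcard : 𝔠 ≤ #B) {α : ι} (hα : Y α ∈ perp B) : InIdeal (range (madSeq Y)) (Y α) := by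
  by_contra h
  replace h : ¬InIdeal (madSeq Y '' Iio α) (Y α) :=
    fun h' => h (h'.mono (image_subset_range _ _))
  have hBα : B ⊆ madSeq Y '' Iio α := by
    intro X hX
    obtain ⟨i, rfl⟩ := hB hX
    refine ⟨i, lt_of_not_ge fun hi => ?_, rfl⟩
    exact infinite_madSeq_inter_of_not_inIdeal Y hMA hι h hi (by
      simpa [inter_comm] using hα.2 _ hX)
  exact (hBcard.trans ((mk_le_mk_of_subset hBα).trans mk_image_le)).not_gt (hι α)

end Recursion

/-- Under `MA(σ-centered)` there is a mad family `F` on `T` of size `𝔠` that is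
`𝔠`-almost decided. -/
theorem stmt19 (hMA : MASigmaCentered) :
    ∃ F : Set (Set BinTree), MadIn (infSets BinTree) F ∧ #F = Cardinal.continuum ∧
      ∀ B ⊆ F, #B = Cardinal.continuum → AlmostDecides B F := by
  have hι : ∀ i : (Cardinal.ord 𝔠).ToType, #(Iio i) < 𝔠 := fun i => by
    simpa using mk_Iio_lt i
  obtain ⟨Y⟩ : Nonempty ((Cardinal.ord 𝔠).ToType ≃ Set BinTree) :=
    Cardinal.eq.1 (by simp [mk_set])
  have hinf := infinite_madSeq Y hMA hι
  have hAD := pairwise_finite_inter_madSeq Y hMA hι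
  have hF := adFamily_range hinf hAD
  refine ⟨range (madSeq Y), ⟨fun X hX => hF.1 X hX, hF, fun Z hZ => ?_⟩, ?_,
    fun B hB hBcard => almostDecides_of_forall_perp_inIdeal hF hB fun Z hZ => ?_⟩
  · obtain ⟨α, rfl⟩ := Y.surjective Z
    exact exists_infinite_inter_madSeq Y hMA hι hZ
  · rw [mk_range_eq _ (injective_of_pairwise_finite_inter hinf hAD), mk_ord_toType]
  · obtain ⟨α, rfl⟩ := Y.surjective Z
    exact inIdeal_range_madSeq_of_mem_perp Y hMA hι hB hBcard.ge hZ
end
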